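/- Let n ≥ 2, k ≥ 1, R ∈ (-1,1) and let ψ : (x,y) → ℝ (with -1 ≤ x < y ≤ 1) be a maximal solution of ψ'(r) = -(1/(k(1-r²)))(ψ(r)²+1)(√(1-r²)ψ(r)² - (n-1)(r-R)ψ(r) + √(1-r²)). Suppose there exists r₀ in the domain with r₀ ∈ (-1,a] and ψ(r₀) < η₁(r₀), or r₀ ∈ (a,1) and ψ(r₀) < 0. Then there exists r₁ ∈ (r₀,1) such that ψ(r) → -∞ as r ↑ r₁ (in particular ψ blows up to -∞ before reaching r = 1). -/

import Mathlib

noncomputable def Bq (n : ℕ) (R r : ℝ) : ℝ :=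
  (((n : ℝ) - 1) ^ 2 + 4) * r ^ 2 - 2 * ((n : ℝ) - 1) ^ 2 * R * r + ((n : ℝ) - 1) ^ 2 * R ^ 2 - 4

noncomputable def rootA (n : ℕ) (R : ℝ) : ℝ :=
  (((n : ℝ) - 1) ^ 2 * R - 2 * Real.sqrt (((n : ℝ) - 1) ^ 2 * (1 - R ^ 2) + 4)) / (((n : ℝ) - 1) ^ 2 + 4)

noncomputable def rootB (n : ℕ) (R : ℝ) : ℝ :=
  (((n : ℝ) - 1) ^ 2 * R + 2 * Real.sqrt (((n : ℝ) - 1) ^ 2 * (1 - R ^ 2) + 4)) / (((n : ℝ) - 1) ^ 2 + 4)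

noncomputable def Aq (n : ℕ) (R x r : ℝ) : ℝ :=
  Real.sqrt (1 - r ^ 2) * x ^ 2 - ((n : ℝ) - 1) * (r - R) * x + Real.sqrt (1 - r ^ 2)

noncomputable def eta1 (n : ℕ) (R r : ℝ) : ℝ :=
  (((n : ℝ) - 1) * (r - R) - Real.sqrt (Bq n R r)) / (2 * Real.sqrt (1 - r ^ 2))

noncomputable def eta2 (n : ℕ) (R r : ℝ) : ℝ :=
  (((n : ℝ) - 1) * (r - R) + Real.sqrt (Bq n R r)) / (2 * Real.sqrt (1 - r ^ 2))

noncomputable def Phi (n k : ℕ) (R r p : ℝ) : ℝ :=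
  -(1 / ((k : ℝ) * (1 - r ^ 2))) * (p ^ 2 + 1) *
    (Real.sqrt (1 - r ^ 2) * p ^ 2 - ((n : ℝ) - 1) * (r - R) * p + Real.sqrt (1 - r ^ 2))

/-!
Write `Phi = -(p² + 1) · Aq / (k (1 - r²))`, so `ψ` decreases exactly where `Aq(ψ, r) > 0`.
In either case of the hypothesis, `Aq(p, r) > 0` for all `r ∈ [r₀, 1)` and `p ≤ ψ(r₀)`: to the
right of `rootA` this holds for `p ≤ 0` because `Bq < 0` on `(rootA, R)`; below `η₁` one has
`p ≤ -1` and `Aq / (√(1 - r²) · (-p)) = (p² + 1)/(-p) + (n - 1)(r - R)/√(1 - r²)`, which only grows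
when `r` increases and `p` decreases. Hence `ψ` is strictly decreasing on `[r₀, y)`.

The solution cannot live up to `r = 1`: past `R` the equation gives `(1/ψ)' ≥ γ / (1 - r)`, so
`1/ψ → +∞`, which is impossible for `ψ < 0`. Thus `y < 1`; the field is `C¹` near `r = y`, so a
finite limit of `ψ` at `y` would let the solution be continued past `y` (glue on a local solution
through the limit point), contradicting maximality. A decreasing `ψ` with no finite limit tends
to `-∞`.
-/

open Set Filter Topology

section ODE

variable {E : Type*} [NormedAddCommGroup E] [NormedSpace ℝ E] [CompleteSpace E]

theorem exists_hasDerivAt_of_contDiffAt {F : ℝ → E → E} {t₀ : ℝ} {x₀ : E}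
    (hF : ContDiffAt ℝ 1 (fun q : ℝ × E => F q.1 q.2) (t₀, x₀)) :
    ∃ α : ℝ → E, α t₀ = x₀ ∧ ∃ ε > 0, ∀ t ∈ Ioo (t₀ - ε) (t₀ + ε), HasDerivAt α (F t (α t)) t := by
  obtain ⟨β, hβ₀, ε, hε, hβ⟩ :=
    ContDiffAt.exists_forall_mem_closedBall_exists_eq_forall_mem_Ioo_hasDerivAt₀
      (f := fun q : ℝ × E => ((1 : ℝ), F q.1 q.2)) (contDiffAt_const.prodMk hF) t₀
  have hβ₁ : ∀ t ∈ Ioo (t₀ - ε) (t₀ + ε), HasDerivAt (fun t => (β t).1) 1 t := fun t ht =>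
    (hasFDerivAt_fst (𝕜 := ℝ) (p := β t)).comp_hasDerivAt t (hβ t ht)
  have hfst : EqOn (fun t => (β t).1) id (Ioo (t₀ - ε) (t₀ + ε)) :=
    isOpen_Ioo.eqOn_of_deriv_eq isPreconnected_Ioo
      (fun t ht => (hβ₁ t ht).differentiableAt.differentiableWithinAt)
      differentiableOn_id (fun t ht => by simp [(hβ₁ t ht).deriv])
      (x := t₀) ⟨by linarith, by linarith⟩ (by simp [hβ₀])
  refine ⟨fun t => (β t).2, by simp [hβ₀], ε, hε, fun t ht => ?_⟩
  have h := (hasFDerivAt_snd (𝕜 := ℝ) (p := β t)).comp_hasDerivAt t (hβ t ht)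
  rw [show (β t).1 = t from hfst ht] at h
  exact h

theorem exists_hasDerivAt_extension_of_tendsto {F : ℝ → E → E} {ψ : ℝ → E} {a b : ℝ} {L : E}
    (hab : a < b) (hF : ContDiffAt ℝ 1 (fun q : ℝ × E => F q.1 q.2) (b, L))
    (hψ : ∀ t ∈ Ioo a b, HasDerivAt ψ (F t (ψ t)) t) (hlim : Tendsto ψ (𝓝[<] b) (𝓝 L)) :
    ∃ b' > b, ∃ g : ℝ → E, EqOn g ψ (Iio b) ∧ ∀ t ∈ Ioo a b', HasDerivAt g (F t (g t)) t := by
  obtain ⟨α, hαb, ε, hε, hα⟩ := exists_hasDerivAt_of_contDiffAt hF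
  set g : ℝ → E := fun t => if t < b then ψ t else α t
  have hgψ : EqOn g ψ (Iio b) := fun t ht => if_pos ht
  have hgα : EqOn g α (Ici b) := fun t ht => if_neg (not_lt.2 ht)
  have hg_left : ∀ t ∈ Ioo a b, HasDerivAt g (F t (g t)) t := fun t ht => by
    rw [hgψ ht.2]
    exact (hψ t ht).congr_of_eventuallyEq (eventuallyEq_of_mem (Iio_mem_nhds ht.2) hgψ)
  refine ⟨b + ε, by linarith, g, hgψ, fun t ht => ?_⟩
  rcases lt_trichotomy t b with htb | rfl | htb
  · exact hg_left t ⟨ht.1, htb⟩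
  · have hleft : HasDerivWithinAt g (F t L) (Iic t) t := by
      have hgt : g t = L := (hgα (mem_Ici.2 le_rfl)).trans hαb
      refine hasDerivWithinAt_Iic_of_tendsto_deriv
        (fun u hu => (hg_left u hu).differentiableAt.differentiableWithinAt) ?_
        (Ioo_mem_nhdsLT hab) ?_
      · rw [ContinuousWithinAt, hgt]
        exact (hlim.mono_left (nhdsWithin_mono _ Ioo_subset_Iio_self)).congr'
          (eventually_nhdsWithin_of_forall fun u hu => (hgψ hu.2).symm)
      · have hpair : Tendsto (fun u => (u, ψ u)) (𝓝[<] t) (𝓝 (t, L)) :=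
          (tendsto_nhdsWithin_of_tendsto_nhds tendsto_id).prodMk_nhds hlim
        refine (hF.continuousAt.tendsto.comp hpair).congr' ?_
        filter_upwards [Ioo_mem_nhdsLT hab] with u hu
        rw [(hg_left u hu).deriv, hgψ hu.2]
        rfl
    have hright : HasDerivWithinAt g (F t L) (Ici t) t := by
      have := (hα t ⟨by linarith, by linarith⟩).hasDerivWithinAt (s := Ici t)
      rw [hαb] at this
      exact this.congr (fun u hu => hgα hu) (hgα (mem_Ici.2 le_rfl))
    rw [hgα (mem_Ici.2 le_rfl), hαb]
    simpa [Iic_union_Ici] using hleft.union hright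
  · rw [hgα (mem_Ici.2 htb.le)]
    exact (hα t ⟨by linarith, ht.2⟩).congr_of_eventuallyEq
      (eventuallyEq_of_mem (Ioi_mem_nhds htb) fun u hu => hgα (mem_Ici.2 (le_of_lt hu)))

end ODE

structure IsMaximalSolution {E : Type*} [NormedAddCommGroup E] [NormedSpace ℝ E]
    (F : ℝ → E → E) (x y : ℝ) (ψ : ℝ → E) : Prop where
  hasDerivAt : ∀ r ∈ Ioo x y, HasDerivAt ψ (F r (ψ r)) r
  not_extends : ∀ x' y' : ℝ, ∀ g : ℝ → E, x' ≤ x → y ≤ y' → Ioo x y ⊂ Ioo x' y' →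
    EqOn g ψ (Ioo x y) → ¬ ∀ r ∈ Ioo x' y', HasDerivAt g (F r (g r)) r

theorem IsMaximalSolution.tendsto_atBot {F : ℝ → ℝ → ℝ} {x y c : ℝ} {ψ : ℝ → ℝ}
    (hψ : IsMaximalSolution F x y ψ)
    (hF : ∀ L, ContDiffAt ℝ 1 (fun q : ℝ × ℝ => F q.1 q.2) (y, L))
    (hc : c ∈ Ioo x y) (hanti : AntitoneOn ψ (Ioo c y)) : Tendsto ψ (𝓝[<] y) atBot := by
  by_cases hbdd : BddBelow (ψ '' Ioo c y)
  · have hlim := hanti.tendsto_nhdsWithin_Ioo_left (nonempty_Ioo.2 hc.2) hbdd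
    obtain ⟨y', hy', g, hgψ, hg⟩ :=
      exists_hasDerivAt_extension_of_tendsto (hc.1.trans hc.2) (hF _) hψ.hasDerivAt hlim
    have hssub : Ioo x y ⊂ Ioo x y' := (ssubset_iff_of_subset (Ioo_subset_Ioo_right hy'.le)).2
      ⟨y, ⟨hc.1.trans hc.2, hy'⟩, fun h => lt_irrefl y h.2⟩
    exact (hψ.not_extends x y' g le_rfl hy'.le hssub (hgψ.mono Ioo_subset_Iio_self) hg).elim
  · rw [Filter.tendsto_atBot]
    intro b
    obtain ⟨_, ⟨t₀, ht₀, rfl⟩, hlt⟩ := not_bddBelow_iff.1 hbdd b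
    filter_upwards [Ioo_mem_nhdsLT ht₀.2] with t ht
    exact (hanti ht₀ ⟨ht₀.1.trans ht.1, ht.2⟩ ht.1.le).trans hlt.le

theorem strictAntiOn_Ico_of_hasDerivAt_of_neg {F : ℝ → ℝ → ℝ} {ψ : ℝ → ℝ} {a b : ℝ}
    (hψ : ∀ t ∈ Ico a b, HasDerivAt ψ (F t (ψ t)) t)
    (hF : ∀ t ∈ Ico a b, ∀ p ≤ ψ a, F t p < 0) : StrictAntiOn ψ (Ico a b) := by
  have hcont : ContinuousOn ψ (Ico a b) := fun t ht => (hψ t ht).continuousAt.continuousWithinAt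
  have hle : ∀ c ∈ Ico a b, ψ c ≤ ψ a := fun c hc => by
    have hsub : Icc a c ⊆ Ico a b := Icc_subset_Ico_right hc.2
    refine image_le_of_deriv_right_lt_deriv_boundary' (B := fun _ => ψ a) (B' := fun _ => 0)
      (hcont.mono hsub) (fun t ht => (hψ t (hsub (Ico_subset_Icc_self ht))).hasDerivWithinAt)
      le_rfl continuousOn_const (fun t _ => hasDerivWithinAt_const t _ (ψ a))
      (fun t ht hta => hF t (hsub (Ico_subset_Icc_self ht)) _ hta.le) ⟨hc.1, le_rfl⟩
  refine strictAntiOn_of_deriv_neg (convex_Ico a b) hcont fun t ht => ?_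
  rw [interior_Ico] at ht
  rw [(hψ t (Ioo_subset_Ico_self ht)).deriv]
  exact hF t (Ioo_subset_Ico_self ht) _ (hle t (Ioo_subset_Ico_self ht))

theorem tendsto_atTop_of_div_one_sub_le_deriv {u u' : ℝ → ℝ} {s γ : ℝ} (hs : s < 1) (hγ : 0 < γ)
    (hu : ∀ r ∈ Ico s 1, HasDerivAt u (u' r) r) (hu' : ∀ r ∈ Ico s 1, γ / (1 - r) ≤ u' r) :
    Tendsto u (𝓝[<] 1) atTop := by
  set φ : ℝ → ℝ := fun r => u r + γ * Real.log (1 - r)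
  have hφ : ∀ r ∈ Ico s 1, HasDerivAt φ (u' r + γ * ((1 - r)⁻¹ * -1)) r := fun r hr =>
    (hu r hr).add (((Real.hasDerivAt_log (sub_pos.2 hr.2).ne').comp r
      ((hasDerivAt_id r).const_sub 1)).const_mul γ)
  have hmono : MonotoneOn φ (Ico s 1) := by
    refine monotoneOn_of_deriv_nonneg (convex_Ico s 1)
      (fun r hr => (hφ r hr).continuousAt.continuousWithinAt)
      (fun r hr => ?_) (fun r hr => ?_) <;> rw [interior_Ico] at hr
    · exact (hφ r (Ioo_subset_Ico_self hr)).differentiableAt.differentiableWithinAt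
    · rw [(hφ r (Ioo_subset_Ico_self hr)).deriv]
      have := hu' r (Ioo_subset_Ico_self hr)
      rw [div_eq_mul_inv] at this
      linarith
  have hlog : Tendsto (fun r => Real.log (1 - r)) (𝓝[<] 1) atBot := by
    refine Real.tendsto_log_nhdsGT_zero.comp (tendsto_nhdsWithin_iff.2 ⟨?_, ?_⟩)
    · exact ((continuous_const.sub continuous_id).tendsto' 1 0 (sub_self 1)).mono_left
        nhdsWithin_le_nhds
    · exact eventually_nhdsWithin_of_forall fun r hr => mem_Ioi.2 (sub_pos.2 hr)
  have hlower : Tendsto (fun r => φ s + -(γ * Real.log (1 - r))) (𝓝[<] 1) atTop :=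
    tendsto_atTop_add_const_left _ _ (tendsto_neg_atBot_atTop.comp (hlog.const_mul_atBot hγ))
  refine tendsto_atTop_mono' _ ?_ hlower
  filter_upwards [Ioo_mem_nhdsLT hs] with r hr
  have := hmono ⟨le_rfl, hs⟩ (Ioo_subset_Ico_self hr) hr.1.le
  simp only [φ] at this ⊢
  linarith

section Algebra

variable {n : ℕ} {R r r₀ p p₀ : ℝ}

lemma one_le_natCast_sub_one (hn : 2 ≤ n) : (1 : ℝ) ≤ (n : ℝ) - 1 := by
  have : (2 : ℝ) ≤ n := by exact_mod_cast hn
  linarith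

lemma one_sub_sq_pos (hr : r ∈ Ioo (-1 : ℝ) 1) : 0 < 1 - r ^ 2 := by
  nlinarith [hr.1, hr.2]

lemma sqrt_one_sub_sq_pos (hr : r ∈ Ioo (-1 : ℝ) 1) : 0 < √(1 - r ^ 2) :=
  Real.sqrt_pos.2 (one_sub_sq_pos hr)

lemma sq_sqrt_one_sub_sq (hr : r ∈ Ioo (-1 : ℝ) 1) : √(1 - r ^ 2) ^ 2 = 1 - r ^ 2 :=
  Real.sq_sqrt (one_sub_sq_pos hr).le

lemma Bq_eq : Bq n R r = (((n : ℝ) - 1) * (r - R)) ^ 2 - 4 * (1 - r ^ 2) := by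
  unfold Bq; ring

lemma four_mul_sqrt_mul_Aq (hr : r ∈ Ioo (-1 : ℝ) 1) :
    4 * √(1 - r ^ 2) * Aq n R p r
      = (2 * √(1 - r ^ 2) * p - ((n : ℝ) - 1) * (r - R)) ^ 2 - Bq n R r := by
  rw [Aq, Bq_eq]
  linear_combination 4 * sq_sqrt_one_sub_sq hr

lemma Aq_eq_mul (hr : r ∈ Ioo (-1 : ℝ) 1) (hp : p ≠ 0) :
    Aq n R p r = √(1 - r ^ 2) * -p
      * ((p ^ 2 + 1) / -p + ((n : ℝ) - 1) * ((r - R) / √(1 - r ^ 2))) := by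
  have hσ := (sqrt_one_sub_sq_pos hr).ne'
  have hp' : -p ≠ 0 := neg_ne_zero.2 hp
  rw [Aq]
  field_simp
  ring

end Algebra

section RootA

variable {n : ℕ} {R r : ℝ}

lemma sq_sqrt_discr (hR1 : -1 < R) (hR2 : R < 1) :
    √(((n : ℝ) - 1) ^ 2 * (1 - R ^ 2) + 4) ^ 2 = ((n : ℝ) - 1) ^ 2 * (1 - R ^ 2) + 4 :=
  Real.sq_sqrt (by nlinarith [mul_nonneg (sq_nonneg ((n : ℝ) - 1)) (by nlinarith : 0 ≤ 1 - R ^ 2)])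

lemma two_le_sqrt_discr (hR1 : -1 < R) (hR2 : R < 1) :
    2 ≤ √(((n : ℝ) - 1) ^ 2 * (1 - R ^ 2) + 4) :=
  Real.le_sqrt_of_sq_le
    (by nlinarith [mul_nonneg (sq_nonneg ((n : ℝ) - 1)) (by nlinarith : 0 ≤ 1 - R ^ 2)])

lemma mul_Bq_eq :
    (((n : ℝ) - 1) ^ 2 + 4) * Bq n R r
      = ((((n : ℝ) - 1) ^ 2 + 4) * r - ((n : ℝ) - 1) ^ 2 * R) ^ 2
        - 4 * (((n : ℝ) - 1) ^ 2 * (1 - R ^ 2) + 4) := by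
  unfold Bq; ring

lemma rootA_lt (hR1 : -1 < R) (hR2 : R < 1) : rootA n R < R := by
  have := two_le_sqrt_discr (n := n) hR1 hR2
  rw [rootA, div_lt_iff₀ (by positivity)]
  linarith

lemma neg_one_lt_rootA (hn : 2 ≤ n) (hR1 : -1 < R) (hR2 : R < 1) : -1 < rootA n R := by
  have hm : (1 : ℝ) ≤ ((n : ℝ) - 1) ^ 2 := by nlinarith [one_le_natCast_sub_one hn]
  have hs := sq_sqrt_discr (n := n) hR1 hR2
  have hs0 := Real.sqrt_nonneg (((n : ℝ) - 1) ^ 2 * (1 - R ^ 2) + 4)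
  set m := ((n : ℝ) - 1) ^ 2
  set s := √(m * (1 - R ^ 2) + 4)
  -- `(m (1 + R) + 4)² - (2 s)² = m (m + 4) (1 + R)²`
  have hsq : (2 * s) ^ 2 < (m * (1 + R) + 4) ^ 2 := by
    nlinarith [mul_pos (mul_pos (by linarith : (0 : ℝ) < m + 4) (by linarith : (0 : ℝ) < m))
      (sq_pos_of_pos (by linarith : (0 : ℝ) < 1 + R))]
  have := lt_of_pow_lt_pow_left₀ 2 (by nlinarith) hsq
  rw [rootA, lt_div_iff₀ (by positivity)]
  linarith

lemma Bq_nonneg_of_le_rootA (hR1 : -1 < R) (hR2 : R < 1) (hr : r ≤ rootA n R) :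
    0 ≤ Bq n R r := by
  have hs := sq_sqrt_discr (n := n) hR1 hR2
  have hs2 := two_le_sqrt_discr (n := n) hR1 hR2
  rw [rootA, le_div_iff₀ (by positivity)] at hr
  have := mul_Bq_eq (n := n) (R := R) (r := r)
  nlinarith

lemma Bq_neg_of_rootA_lt_of_lt (hR1 : -1 < R) (hR2 : R < 1) (hr : rootA n R < r) (hrR : r < R) :
    Bq n R r < 0 := by
  have hs := sq_sqrt_discr (n := n) hR1 hR2
  have hs2 := two_le_sqrt_discr (n := n) hR1 hR2
  rw [rootA, div_lt_iff₀ (by positivity)] at hr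
  have := mul_Bq_eq (n := n) (R := R) (r := r)
  set s := √(((n : ℝ) - 1) ^ 2 * (1 - R ^ 2) + 4)
  set X := (((n : ℝ) - 1) ^ 2 + 4) * r - ((n : ℝ) - 1) ^ 2 * R
  have hX : X < 2 * s := by nlinarith
  nlinarith [mul_pos (by linarith : 0 < 2 * s - X) (by linarith : 0 < 2 * s + X)]

end RootA

section Aq

variable {n : ℕ} {R r r₀ p p₀ : ℝ}

lemma Aq_pos_of_lt_eta1 (hr : r ∈ Ioo (-1 : ℝ) 1) (hB : 0 ≤ Bq n R r) (hp : p < eta1 n R r) :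
    0 < Aq n R p r := by
  have hσ := sqrt_one_sub_sq_pos hr
  have h4 := four_mul_sqrt_mul_Aq (n := n) (R := R) (p := p) hr
  rw [eta1, lt_div_iff₀ (by positivity)] at hp
  have hB' : √(Bq n R r) < -(2 * √(1 - r ^ 2) * p - ((n : ℝ) - 1) * (r - R)) := by linarith
  have := mul_self_lt_mul_self (Real.sqrt_nonneg _) hB'
  rw [Real.mul_self_sqrt hB] at this
  nlinarith

lemma eta1_le_neg_one (hn : 2 ≤ n) (hr : r ∈ Ioo (-1 : ℝ) 1) (hB : 0 ≤ Bq n R r) (hrR : r < R) :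
    eta1 n R r ≤ -1 := by
  have hσ := sqrt_one_sub_sq_pos hr
  have hσ2 := sq_sqrt_one_sub_sq hr
  have hβ : ((n : ℝ) - 1) * (r - R) < 0 :=
    mul_neg_of_pos_of_neg (by linarith [one_le_natCast_sub_one hn]) (by linarith)
  -- with `β = (n - 1)(r - R) < 0` and `σ = √(1 - r²)`: `Bq = (β - 2σ)(β + 2σ) ≥ 0` forces `β + 2σ ≤ 0`
  have hβσ : ((n : ℝ) - 1) * (r - R) + 2 * √(1 - r ^ 2) ≤ 0 := by
    rw [Bq_eq] at hB
    nlinarith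
  rw [eta1, div_le_iff₀ (by positivity)]
  linarith [Real.sqrt_nonneg (Bq n R r)]

lemma Aq_pos_of_rootA_lt (hn : 2 ≤ n) (hR1 : -1 < R) (hR2 : R < 1) (hr : rootA n R < r)
    (hr1 : r < 1) (hp : p ≤ 0) : 0 < Aq n R p r := by
  have hr' : r ∈ Ioo (-1 : ℝ) 1 := ⟨(neg_one_lt_rootA hn hR1 hR2).trans hr, hr1⟩
  have hσ := sqrt_one_sub_sq_pos hr'
  rcases le_or_gt R r with hRr | hrR
  · have : 0 ≤ ((n : ℝ) - 1) * (r - R) :=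
      mul_nonneg (by linarith [one_le_natCast_sub_one hn]) (by linarith)
    rw [Aq]
    nlinarith [mul_nonneg this (neg_nonneg.2 hp), mul_nonneg hσ.le (sq_nonneg p)]
  · have hB := Bq_neg_of_rootA_lt_of_lt (n := n) hR1 hR2 hr hrR
    have h4 := four_mul_sqrt_mul_Aq (n := n) (R := R) (p := p) hr'
    nlinarith [sq_nonneg (2 * √(1 - r ^ 2) * p - ((n : ℝ) - 1) * (r - R))]

lemma strictMonoOn_sub_div_sqrt_one_sub_sq (hR1 : -1 < R) (hR2 : R < 1) :
    StrictMonoOn (fun r => (r - R) / √(1 - r ^ 2)) (Ioo (-1) 1) := by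
  have hderiv : ∀ r ∈ Ioo (-1 : ℝ) 1, HasDerivAt (fun r => (r - R) / √(1 - r ^ 2))
      ((1 - r * R) / √(1 - r ^ 2) ^ 3) r := fun r hr => by
    have hσ := sqrt_one_sub_sq_pos hr
    have h := ((hasDerivAt_id r).sub_const R).div
      (((hasDerivAt_pow 2 r).const_sub 1).sqrt (one_sub_sq_pos hr).ne') hσ.ne'
    refine h.congr_deriv ?_
    simp only [id, Nat.cast_ofNat]
    field_simp
    rw [sq_sqrt_one_sub_sq hr]
    ring
  refine strictMonoOn_of_deriv_pos (convex_Ioo (-1) 1)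
    (fun r hr => (hderiv r hr).continuousAt.continuousWithinAt) fun r hr => ?_
  rw [interior_Ioo] at hr
  rw [(hderiv r hr).deriv]
  have := sqrt_one_sub_sq_pos hr
  have h1 := mul_pos (sub_pos.2 hr.2) (neg_lt_iff_pos_add.1 hR1)
  have h2 := mul_pos (neg_lt_iff_pos_add.1 hr.1) (sub_pos.2 hR2)
  exact div_pos (by nlinarith) (by positivity)

lemma Aq_pos_of_le (hn : 2 ≤ n) (hR1 : -1 < R) (hR2 : R < 1) (hr₀ : r₀ ∈ Ioo (-1 : ℝ) 1)
    (hr : r₀ ≤ r) (hr1 : r < 1) (hp₀ : p₀ ≤ -1) (hp : p ≤ p₀) (hA : 0 < Aq n R p₀ r₀) :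
    0 < Aq n R p r := by
  have hr' : r ∈ Ioo (-1 : ℝ) 1 := ⟨hr₀.1.trans_le hr, hr1⟩
  rw [Aq_eq_mul hr₀ (by linarith)] at hA
  rw [Aq_eq_mul hr' (by linarith)]
  have hG₀ := pos_of_mul_pos_right hA (mul_nonneg (sqrt_one_sub_sq_pos hr₀).le (by linarith))
  have hpmono : (p₀ ^ 2 + 1) / -p₀ ≤ (p ^ 2 + 1) / -p := by
    rw [div_le_div_iff₀ (by linarith) (by linarith)]
    nlinarith [mul_nonneg (sub_nonneg.2 hp) (by nlinarith : (0 : ℝ) ≤ p * p₀ - 1)]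
  have hrmono := (strictMonoOn_sub_div_sqrt_one_sub_sq hR1 hR2).monotoneOn hr₀ hr' hr
  have := mul_le_mul_of_nonneg_left hrmono
    (by linarith [one_le_natCast_sub_one hn] : (0 : ℝ) ≤ (n : ℝ) - 1)
  exact mul_pos (mul_pos (sqrt_one_sub_sq_pos hr') (by linarith)) (by linarith)

end Aq

section Phi

variable {n k : ℕ} {R r r₀ s p p₀ M : ℝ}

lemma Phi_eq_mul_Aq :
    Phi n k R r p = -(1 / ((k : ℝ) * (1 - r ^ 2))) * (p ^ 2 + 1) * Aq n R p r := rfl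

lemma Phi_neg (hk : 1 ≤ k) (hr : r ∈ Ioo (-1 : ℝ) 1) (hA : 0 < Aq n R p r) :
    Phi n k R r p < 0 := by
  have : 0 < (k : ℝ) * (1 - r ^ 2) := mul_pos (by exact_mod_cast hk) (one_sub_sq_pos hr)
  rw [Phi_eq_mul_Aq, neg_mul, neg_mul, neg_lt_zero]
  positivity

lemma contDiffAt_Phi (hk : 1 ≤ k) (hr : r ∈ Ioo (-1 : ℝ) 1) (p : ℝ) :
    ContDiffAt ℝ 1 (fun q : ℝ × ℝ => Phi n k R q.1 q.2) (r, p) := by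
  have hr2 := (one_sub_sq_pos hr).ne'
  have hk0 : (k : ℝ) ≠ 0 := by positivity
  unfold Phi
  fun_prop (disch := first | assumption | exact mul_ne_zero hk0 hr2)

def blowupRegion (n : ℕ) (R : ℝ) : Set (ℝ × ℝ) :=
  {q | (q.1 ∈ Ioc (-1) (rootA n R) ∧ q.2 < eta1 n R q.1) ∨ (q.1 ∈ Ioo (rootA n R) 1 ∧ q.2 < 0)}

lemma blowupRegion_subset (hn : 2 ≤ n) (hR1 : -1 < R) (hR2 : R < 1) :
    blowupRegion n R ⊆ Ioo (-1) 1 ×ˢ Iio 0 := by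
  rintro ⟨r₀, p₀⟩ (⟨⟨hr₀, hr₀A⟩, hp₀⟩ | ⟨⟨hr₀A, hr₀⟩, hp₀⟩)
  · have hr₀1 : r₀ < 1 := hr₀A.trans_lt ((rootA_lt hR1 hR2).trans hR2)
    have hB := Bq_nonneg_of_le_rootA hR1 hR2 hr₀A
    exact ⟨⟨hr₀, hr₀1⟩, hp₀.trans_le ((eta1_le_neg_one hn ⟨hr₀, hr₀1⟩ hB
      (hr₀A.trans_lt (rootA_lt hR1 hR2))).trans (by norm_num))⟩
  · exact ⟨⟨(neg_one_lt_rootA hn hR1 hR2).trans hr₀A, hr₀⟩, hp₀⟩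

lemma Phi_neg_of_mem_blowupRegion (hn : 2 ≤ n) (hk : 1 ≤ k) (hR1 : -1 < R) (hR2 : R < 1)
    (h : (r₀, p₀) ∈ blowupRegion n R) : ∀ r ∈ Ico r₀ 1, ∀ p ≤ p₀, Phi n k R r p < 0 := by
  intro r hr p hp
  have hr₀ := (blowupRegion_subset hn hR1 hR2 h).1
  have hr' : r ∈ Ioo (-1 : ℝ) 1 := ⟨hr₀.1.trans_le hr.1, hr.2⟩
  refine Phi_neg hk hr' ?_
  rcases h with ⟨⟨-, hr₀A⟩, hp₀⟩ | ⟨⟨hr₀A, -⟩, hp₀⟩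
  · have hB := Bq_nonneg_of_le_rootA hR1 hR2 hr₀A
    have hp₀1 := hp₀.le.trans (eta1_le_neg_one hn hr₀ hB (hr₀A.trans_lt (rootA_lt hR1 hR2)))
    exact Aq_pos_of_le hn hR1 hR2 hr₀ hr.1 hr.2 hp₀1 hp (Aq_pos_of_lt_eta1 hr₀ hB hp₀)
  · exact Aq_pos_of_rootA_lt hn hR1 hR2 (hr₀A.trans_le hr.1) hr.2 (hp.trans hp₀.le)

lemma div_one_sub_le_neg_Phi_div_sq (hn : 2 ≤ n) (hk : 1 ≤ k) (hsR : R < s) (hsr : s ≤ r)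
    (hr : r ∈ Ioo (-1 : ℝ) 1) (hM : 0 < M) (hp : p ≤ -M) :
    ((n : ℝ) - 1) * (s - R) * M / (2 * k) / (1 - r) ≤ -Phi n k R r p / p ^ 2 := by
  have hn1 := one_le_natCast_sub_one hn
  have hk0 : (0 : ℝ) < k := by exact_mod_cast hk
  have hσ := sqrt_one_sub_sq_pos hr
  have h1r : 0 < 1 - r := sub_pos.2 hr.2
  have h1r' : 0 < 1 + r := by linarith [hr.1]
  have hp2 : 0 < p ^ 2 := by nlinarith
  have hc : 0 ≤ ((n : ℝ) - 1) * (s - R) * M := by positivity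
  have hAq : ((n : ℝ) - 1) * (s - R) * M ≤ Aq n R p r := by
    have : ((n : ℝ) - 1) * (s - R) * M ≤ ((n : ℝ) - 1) * (r - R) * -p :=
      mul_le_mul (mul_le_mul_of_nonneg_left (by linarith) (by linarith)) (by linarith) hM.le
        (by nlinarith)
    rw [Aq]
    nlinarith [mul_nonneg hσ.le (sq_nonneg p)]
  have hPhi : -Phi n k R r p / p ^ 2
      = (p ^ 2 + 1) / p ^ 2 * (Aq n R p r / (k * (1 - r) * (1 + r))) := by
    rw [Phi_eq_mul_Aq, show (1 : ℝ) - r ^ 2 = (1 - r) * (1 + r) by ring]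
    field_simp
  rw [hPhi, div_div, mul_comm (2 * (k : ℝ))]
  calc ((n : ℝ) - 1) * (s - R) * M / ((1 - r) * (2 * k))
      ≤ Aq n R p r / (k * (1 - r) * (1 + r)) := by
        rw [div_le_div_iff₀ (by positivity) (by positivity)]
        nlinarith [mul_le_mul hAq (by nlinarith [mul_nonneg (mul_nonneg hk0.le h1r.le) h1r.le] :
          (k : ℝ) * (1 - r) * (1 + r) ≤ (1 - r) * (2 * k))
          (by positivity) (hc.trans hAq)]
    _ ≤ (p ^ 2 + 1) / p ^ 2 * (Aq n R p r / (k * (1 - r) * (1 + r))) := by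
        refine le_mul_of_one_le_left (div_nonneg (hc.trans hAq) (by positivity)) ?_
        rw [le_div_iff₀ hp2]
        linarith

lemma not_forall_hasDerivAt_Phi_Ico_one {ψ : ℝ → ℝ} (hn : 2 ≤ n) (hk : 1 ≤ k) (hR2 : R < 1)
    (hr₀ : r₀ ∈ Ioo (-1 : ℝ) 1) (hψ₀ : ψ r₀ < 0)
    (hPhi : ∀ r ∈ Ico r₀ 1, ∀ p ≤ ψ r₀, Phi n k R r p < 0) :
    ¬ ∀ r ∈ Ico r₀ 1, HasDerivAt ψ (Phi n k R r (ψ r)) r := by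
  intro hode
  have hanti := strictAntiOn_Ico_of_hasDerivAt_of_neg hode hPhi
  set s := max r₀ ((R + 1) / 2)
  have hsR : R < s := lt_max_of_lt_right (by linarith)
  have hs1 : s < 1 := max_lt hr₀.2 (by linarith)
  have hmem : ∀ r ∈ Ico s 1, r ∈ Ico r₀ 1 := fun r hr => ⟨(le_max_left _ _).trans hr.1, hr.2⟩
  have hle : ∀ r ∈ Ico s 1, ψ r ≤ ψ r₀ := fun r hr =>
    hanti.antitoneOn ⟨le_rfl, hr₀.2⟩ (hmem r hr) (hmem r hr).1
  have hγ : 0 < ((n : ℝ) - 1) * (s - R) * -ψ r₀ / (2 * k) := by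
    have := one_le_natCast_sub_one hn
    have : (0 : ℝ) < k := by exact_mod_cast hk
    have : 0 < s - R := sub_pos.2 hsR
    have : 0 < -ψ r₀ := neg_pos.2 hψ₀
    positivity
  have htend := tendsto_atTop_of_div_one_sub_le_deriv hs1 hγ
    (fun r hr => (hode r (hmem r hr)).inv (by linarith [hle r hr])) fun r hr =>
      div_one_sub_le_neg_Phi_div_sq hn hk hsR hr.1 ⟨hr₀.1.trans_le (hmem r hr).1, hr.2⟩
        (neg_pos.2 hψ₀) (by linarith [hle r hr])
  obtain ⟨r, hr, hrs⟩ := ((htend.eventually_gt_atTop 0).and (Ioo_mem_nhdsLT hs1)).exists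
  have := hle r (Ioo_subset_Ico_self hrs)
  exact (inv_lt_zero.2 (by linarith)).not_gt hr

end Phi

theorem stmt_6_general (n k : ℕ) (hn : 2 ≤ n) (hk : 1 ≤ k) (R : ℝ) (hR1 : -1 < R) (hR2 : R < 1)
    (x y : ℝ) (ψ : ℝ → ℝ)
    (hode : ∀ r ∈ Set.Ioo x y, HasDerivAt ψ (Phi n k R r (ψ r)) r)
    (hmax : ∀ x' y' : ℝ, ∀ g : ℝ → ℝ, x' ≤ x → y ≤ y' → Set.Ioo x y ⊂ Set.Ioo x' y' →
      Set.EqOn g ψ (Set.Ioo x y) →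
      ¬ (∀ r ∈ Set.Ioo x' y', HasDerivAt g (Phi n k R r (g r)) r))
    (r₀ : ℝ) (hr₀ : r₀ ∈ Set.Ioo x y)
    (hcase : (r₀ ∈ Set.Ioc (-1 : ℝ) (rootA n R) ∧ ψ r₀ < eta1 n R r₀) ∨
      (r₀ ∈ Set.Ioo (rootA n R) 1 ∧ ψ r₀ < 0)) :
    ∃ r₁ ∈ Set.Ioo r₀ (1 : ℝ),
      Filter.Tendsto ψ (nhdsWithin r₁ (Set.Iio r₁)) Filter.atBot := by
  have hregion : (r₀, ψ r₀) ∈ blowupRegion n R := hcase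
  obtain ⟨hr₀1, hψ₀⟩ := blowupRegion_subset hn hR1 hR2 hregion
  have hPhi := Phi_neg_of_mem_blowupRegion (k := k) hn hk hR1 hR2 hregion
  have hy1 : y < 1 := by
    by_contra! hy1
    exact not_forall_hasDerivAt_Phi_Ico_one hn hk hR2 hr₀1 hψ₀ hPhi fun r hr =>
      hode r ⟨hr₀.1.trans_le hr.1, hr.2.trans_le hy1⟩
  have hanti := strictAntiOn_Ico_of_hasDerivAt_of_neg
    (fun r hr => hode r ⟨hr₀.1.trans_le hr.1, hr.2⟩) fun r hr => hPhi r ⟨hr.1, hr.2.trans hy1⟩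
  exact ⟨y, ⟨hr₀.2, hy1⟩, IsMaximalSolution.tendsto_atBot ⟨hode, hmax⟩
    (contDiffAt_Phi hk ⟨hr₀1.1.trans hr₀.2, hy1⟩) hr₀ (hanti.antitoneOn.mono Ioo_subset_Ico_self)⟩

theorem stmt_6 (n k : ℕ) (hn : 2 ≤ n) (hk : 1 ≤ k) (R : ℝ) (hR1 : -1 < R) (hR2 : R < 1)
    (x y : ℝ) (hx : -1 ≤ x) (hxy : x < y) (hy : y ≤ 1) (ψ : ℝ → ℝ)
    (hode : ∀ r ∈ Set.Ioo x y, HasDerivAt ψ (Phi n k R r (ψ r)) r)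
    (hmax : ∀ x' y' : ℝ, ∀ g : ℝ → ℝ, x' ≤ x → y ≤ y' → Set.Ioo x y ⊂ Set.Ioo x' y' →
      Set.EqOn g ψ (Set.Ioo x y) →
      ¬ (∀ r ∈ Set.Ioo x' y', HasDerivAt g (Phi n k R r (g r)) r))
    (r₀ : ℝ) (hr₀ : r₀ ∈ Set.Ioo x y)
    (hcase : (r₀ ∈ Set.Ioc (-1 : ℝ) (rootA n R) ∧ ψ r₀ < eta1 n R r₀) ∨
      (r₀ ∈ Set.Ioo (rootA n R) 1 ∧ ψ r₀ < 0)) :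
    ∃ r₁ ∈ Set.Ioo r₀ (1 : ℝ),
      Filter.Tendsto ψ (nhdsWithin r₁ (Set.Iio r₁)) Filter.atBot :=
  stmt_6_general n k hn hk R hR1 hR2 x y ψ hode hmax r₀ hr₀ hcase
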